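/- arXiv:math/0502454 — 2 statements merged into one kernel-verified Lean document; each statement's English description precedes it below -/
import Mathlib

section
/- Let (G,w) be a weighted graph and let C be an oriented simple circuit of G, identified with the corresponding vector of C(G,ℝ). Then C/‖C‖_w is a vertex (extreme point) of the stable ball B(G,w); in other words, C is proportional to a vertex of B(G,w), the factor of proportionality being exactly the w-length ‖C‖_w of the circuit. -/
noncomputable section

/-- A finite connected multigraph with a fixed orientation of each edge. -/
structure Multigraph where
  V : Type
  E : Type
  [finV : Fintype V]
  [finE : Fintype E]
  [decV : DecidableEq V]
  [decE : DecidableEq E]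
  src : E → V
  tgt : E → V
  connected : ∀ u v : V, Relation.ReflTransGen
    (fun a b => ∃ e, (src e = a ∧ tgt e = b) ∨ (src e = b ∧ tgt e = a)) u v

attribute [instance] Multigraph.finV Multigraph.finE Multigraph.decV Multigraph.decE

namespace Multigraph

variable (G : Multigraph)

/-- The simplicial boundary map `∂ : C(G,ℝ) = ℝ^E → ℝ^V`. -/
def boundary : (G.E → ℝ) →ₗ[ℝ] (G.V → ℝ) :=
  LinearMap.pi fun v =>
    ∑ e : G.E, (((if G.tgt e = v then (1 : ℝ) else 0) - (if G.src e = v then 1 else 0)) •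
      LinearMap.proj e)

/-- The first real homology of `G`, as the subspace of 1-cycles in `ℝ^E`. -/
def H1 : Submodule ℝ (G.E → ℝ) := LinearMap.ker G.boundary

/-- The weighted ℓ¹-norm on chains; its restriction to `H1` is the stable norm. -/
def wnorm (w : G.E → ℝ) (u : G.E → ℝ) : ℝ := ∑ e : G.E, w e * |u e|

/-- The stable ball: unit ball of the stable norm in `H_1(G,ℝ)`. -/
def stableBall (w : G.E → ℝ) : Set (G.E → ℝ) :=
  {u | u ∈ G.H1 ∧ G.wnorm w u ≤ 1}

/-- An oriented simple circuit of `G`: a closed oriented edge walk visiting each of its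
vertices exactly once (starting point immaterial, encoded by indexing over `ZMod n`). -/
structure Circuit (G : Multigraph) where
  n : ℕ
  npos : 0 < n
  vert : ZMod n → G.V
  edge : ZMod n → G.E
  dir : ZMod n → Bool
  vertInj : Function.Injective vert
  edgeInj : Function.Injective edge
  incid : ∀ i, (dir i = true ∧ G.src (edge i) = vert i ∧ G.tgt (edge i) = vert (i + 1)) ∨
      (dir i = false ∧ G.src (edge i) = vert (i + 1) ∧ G.tgt (edge i) = vert i)

/-- The 1-chain associated to an oriented simple circuit. -/
def Circuit.chain {G : Multigraph} (C : Circuit G) : G.E → ℝ := fun e =>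
  haveI : NeZero C.n := ⟨C.npos.ne'⟩
  ∑ i : ZMod C.n, if C.edge i = e then (if C.dir i then (1 : ℝ) else -1) else 0

/-- The `w`-length of an oriented simple circuit. -/
def Circuit.wlen {G : Multigraph} (C : Circuit G) (w : G.E → ℝ) : ℝ :=
  haveI : NeZero C.n := ⟨C.npos.ne'⟩
  ∑ i : ZMod C.n, w (C.edge i)

end Multigraph

/-!
The circuit chain `C` is a cycle with `‖C‖_w = wlen C`. If `C / ‖C‖_w` lies in an open segment
`(y, z)` of the stable ball, the triangle inequality for the weighted ℓ¹ norm is an equality, so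
`y` and `z` vanish off the circuit. A cycle carried by a simple circuit has constant flow along
it, hence is a multiple `c • C`, and `‖c • C‖_w ≤ 1` confines `c` to `[-1/‖C‖_w, 1/‖C‖_w]`, of
which `1/‖C‖_w` is an endpoint.
-/

theorem ZMod.apply_eq_apply_zero {n : ℕ} [NeZero n] {α : Type*} {f : ZMod n → α}
    (hf : ∀ i, f (i + 1) = f i) (i : ZMod n) : f i = f 0 := by
  obtain ⟨k, rfl⟩ := ZMod.natCast_zmod_surjective i
  induction k with
  | zero => simp
  | succ k ih => rw [Nat.cast_succ, hf, ih]

theorem mem_openSegment_of_smul_mem_openSegment_smul {𝕜 E : Type*} [Field 𝕜] [LinearOrder 𝕜]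
    [IsStrictOrderedRing 𝕜] [AddCommGroup E] [Module 𝕜 E] {v : E} (hv : v ≠ 0) {s r t : 𝕜}
    (h : t • v ∈ openSegment 𝕜 (s • v) (r • v)) : t ∈ openSegment 𝕜 s r := by
  rw [← LinearMap.toSpanSingleton_apply, ← LinearMap.toSpanSingleton_apply,
    ← LinearMap.toSpanSingleton_apply, ← LinearMap.coe_toAffineMap,
    ← image_openSegment] at h
  obtain ⟨t', ht', heq⟩ := h
  exact (smul_left_injective 𝕜 hv heq : t' = t) ▸ ht'

namespace Multigraph

variable {G : Multigraph}

def incidence (e : G.E) (v : G.V) : ℝ :=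
  (if G.tgt e = v then 1 else 0) - (if G.src e = v then 1 else 0)

theorem boundary_apply (u : G.E → ℝ) (v : G.V) :
    G.boundary u v = ∑ e, incidence e v * u e := by
  simp [boundary, incidence]

theorem wnorm_smul (w : G.E → ℝ) (c : ℝ) (u : G.E → ℝ) :
    G.wnorm w (c • u) = |c| * G.wnorm w u := by
  simp only [wnorm, Finset.mul_sum, Pi.smul_apply, smul_eq_mul, abs_mul]
  exact Finset.sum_congr rfl fun _ _ => by ring

/-- Otherwise the triangle inequality for `wnorm` would be strict at `e`. -/
theorem eq_zero_of_mem_openSegment_of_wnorm_le {w : G.E → ℝ} (hw : ∀ e, 0 < w e)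
    {x y z : G.E → ℝ} (hy : G.wnorm w y ≤ G.wnorm w x) (hz : G.wnorm w z ≤ G.wnorm w x)
    (hxyz : x ∈ openSegment ℝ y z) {e : G.E} (hxe : x e = 0) : y e = 0 := by
  obtain ⟨a, b, ha, hb, hab, rfl⟩ := hxyz
  by_contra hye
  have hle : ∀ e' ∈ Finset.univ,
      w e' * |(a • y + b • z) e'| ≤ w e' * (a * |y e'| + b * |z e'|) :=
    fun e' _ => mul_le_mul_of_nonneg_left (by
      simpa [abs_mul, abs_of_pos ha, abs_of_pos hb] using abs_add_le (a * y e') (b * z e'))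
      (hw e').le
  have hlt : w e * |(a • y + b • z) e| < w e * (a * |y e| + b * |z e|) := by
    rw [hxe, abs_zero, mul_zero]
    exact mul_pos (hw e) (add_pos_of_pos_of_nonneg (mul_pos ha (abs_pos.2 hye)) (by positivity))
  have hsum : ∑ e', w e' * (a * |y e'| + b * |z e'|) = a * G.wnorm w y + b * G.wnorm w z := by
    simp only [wnorm, Finset.mul_sum, ← Finset.sum_add_distrib]
    exact Finset.sum_congr rfl fun _ _ => by ring
  have := Finset.sum_lt_sum hle ⟨e, Finset.mem_univ e, hlt⟩
  rw [hsum] at this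
  change G.wnorm w _ < _ at this
  have hconv : a * G.wnorm w (a • y + b • z) + b * G.wnorm w (a • y + b • z) =
      G.wnorm w (a • y + b • z) := by rw [← add_mul, hab, one_mul]
  linarith [mul_le_mul_of_nonneg_left hy ha.le, mul_le_mul_of_nonneg_left hz hb.le]

namespace Circuit

variable (C : Circuit G)

instance : NeZero C.n := ⟨C.npos.ne'⟩

def sgn (i : ZMod C.n) : ℝ := if C.dir i then 1 else -1

theorem sgn_mul_self (i : ZMod C.n) : C.sgn i * C.sgn i = 1 := by
  unfold sgn; split <;> norm_num

theorem abs_sgn (i : ZMod C.n) : |C.sgn i| = 1 := by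
  unfold sgn; split <;> norm_num

theorem chain_apply_edge (i : ZMod C.n) : C.chain (C.edge i) = C.sgn i := by
  simp [chain, sgn, C.edgeInj.eq_iff]

theorem chain_eq_zero {e : G.E} (he : e ∉ Set.range C.edge) : C.chain e = 0 :=
  Finset.sum_eq_zero fun i _ => if_neg fun h => he ⟨i, h⟩

theorem chain_ne_zero : C.chain ≠ 0 := fun h => by
  simpa [chain_apply_edge, abs_sgn] using congrArg (fun u => |u (C.edge 0)|) h

theorem wnorm_chain (w : G.E → ℝ) : G.wnorm w C.chain = C.wlen w :=
  (Fintype.sum_of_injective C.edge C.edgeInj _ _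
    (fun e he => by rw [C.chain_eq_zero he, abs_zero, mul_zero])
    (fun i => by rw [chain_apply_edge, abs_sgn, mul_one])).symm

theorem wlen_pos {w : G.E → ℝ} (hw : ∀ e, 0 < w e) : 0 < C.wlen w :=
  Finset.sum_pos (fun _ _ => hw _) Finset.univ_nonempty

theorem incidence_edge (i : ZMod C.n) (v : G.V) :
    incidence (C.edge i) v =
      C.sgn i * ((if C.vert (i + 1) = v then 1 else 0) - (if C.vert i = v then 1 else 0)) := by
  rcases C.incid i with ⟨hd, hs, ht⟩ | ⟨hd, hs, ht⟩ <;> simp [incidence, sgn, hd, hs, ht]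

theorem boundary_apply_of_support {u : G.E → ℝ} (hu : ∀ e ∉ Set.range C.edge, u e = 0)
    (v : G.V) :
    G.boundary u v = ∑ i, C.sgn i * u (C.edge i) *
      ((if C.vert (i + 1) = v then 1 else 0) - (if C.vert i = v then 1 else 0)) := by
  rw [boundary_apply]
  refine (Fintype.sum_of_injective C.edge C.edgeInj _ _
    (fun e he => by rw [hu e he, mul_zero]) (fun i => ?_)).symm
  rw [incidence_edge]
  ring

theorem boundary_apply_vert_add_one {u : G.E → ℝ} (hu : ∀ e ∉ Set.range C.edge, u e = 0)
    (i : ZMod C.n) :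
    G.boundary u (C.vert (i + 1)) =
      C.sgn i * u (C.edge i) - C.sgn (i + 1) * u (C.edge (i + 1)) := by
  simp [C.boundary_apply_of_support hu, C.vertInj.eq_iff, mul_sub, Finset.sum_sub_distrib]

theorem chain_mem_H1 : C.chain ∈ G.H1 := by
  refine LinearMap.mem_ker.2 (funext fun v => ?_)
  rw [C.boundary_apply_of_support (fun e => C.chain_eq_zero), Pi.zero_apply]
  simp only [chain_apply_edge, sgn_mul_self, one_mul, Finset.sum_sub_distrib]
  exact sub_eq_zero.2 (Fintype.sum_equiv (Equiv.addRight 1) _ _ fun _ => rfl)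

/-- Kirchhoff's law at `C.vert (i + 1)` makes the flow `C.sgn i * u (C.edge i)` constant along
the circuit. -/
theorem exists_eq_smul_chain {u : G.E → ℝ} (hu : u ∈ G.H1)
    (hsupp : ∀ e ∉ Set.range C.edge, u e = 0) : ∃ c : ℝ, u = c • C.chain := by
  have hflow : ∀ i, C.sgn (i + 1) * u (C.edge (i + 1)) = C.sgn i * u (C.edge i) := fun i =>
    (sub_eq_zero.1 ((C.boundary_apply_vert_add_one hsupp i).symm.trans
      (congrFun hu (C.vert (i + 1))))).symm
  refine ⟨C.sgn 0 * u (C.edge 0), funext fun e => ?_⟩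
  by_cases he : e ∈ Set.range C.edge
  · obtain ⟨i, rfl⟩ := he
    rw [Pi.smul_apply, smul_eq_mul, chain_apply_edge,
      ← ZMod.apply_eq_apply_zero (f := fun i => C.sgn i * u (C.edge i)) hflow i]
    linear_combination (-u (C.edge i)) * C.sgn_mul_self i
  · rw [hsupp e he, Pi.smul_apply, C.chain_eq_zero he, smul_zero]

theorem smul_chain_mem_stableBall_iff {w : G.E → ℝ} (hw : ∀ e, 0 < w e) (c : ℝ) :
    c • C.chain ∈ G.stableBall w ↔ c ∈ Set.Icc (-(C.wlen w)⁻¹) (C.wlen w)⁻¹ := by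
  rw [Set.mem_Icc, ← abs_le, inv_eq_one_div, le_div_iff₀ (C.wlen_pos hw), stableBall,
    Set.mem_ofPred_eq, wnorm_smul, wnorm_chain, and_iff_right (G.H1.smul_mem c C.chain_mem_H1)]

end Circuit

end Multigraph

open Multigraph in
/-- **Lemma A1.** Every oriented simple circuit `C` of `G`, identified with the corresponding
vector of `C(G,ℝ)`, is proportional to a vertex (extreme point) of the stable ball: the point
`C / ‖C‖_w` is a vertex of `B(G,w)`, and the proportionality factor `‖C‖_w` is exactly the
`w`-length of the circuit. -/
theorem circuit_normalized_mem_extremePoints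
    (G : Multigraph) (w : G.E → ℝ) (hw : ∀ e, 0 < w e) (C : Multigraph.Circuit G) :
    (G.wnorm w C.chain)⁻¹ • C.chain ∈ Set.extremePoints ℝ (G.stableBall w) ∧
    G.wnorm w C.chain = C.wlen w := by
  have hlen := C.wnorm_chain w
  refine ⟨?_, hlen⟩
  have hL : 0 < (C.wlen w)⁻¹ := inv_pos.2 (C.wlen_pos hw)
  have hext : (C.wlen w)⁻¹ ∈ Set.extremePoints ℝ (Set.Icc (-(C.wlen w)⁻¹) (C.wlen w)⁻¹) := by
    rw [Set.extremePoints_Icc (by linarith)]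
    exact Or.inr rfl
  have hnorm : G.wnorm w ((C.wlen w)⁻¹ • C.chain) = 1 := by
    rw [wnorm_smul, hlen, abs_of_pos hL, inv_mul_cancel₀ (C.wlen_pos hw).ne']
  have hcarried : ∀ {y z}, y ∈ G.stableBall w → z ∈ G.stableBall w →
      (C.wlen w)⁻¹ • C.chain ∈ openSegment ℝ y z → ∃ c : ℝ, y = c • C.chain :=
    fun hy hz hxyz => C.exists_eq_smul_chain hy.1 fun e he =>
      eq_zero_of_mem_openSegment_of_wnorm_le hw (hy.2.trans hnorm.ge) (hz.2.trans hnorm.ge) hxyz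
        (by rw [Pi.smul_apply, C.chain_eq_zero he, smul_zero])
  rw [hlen]
  refine ⟨(C.smul_chain_mem_stableBall_iff hw _).2 hext.1, fun y hy z hz hxyz => ?_⟩
  obtain ⟨cy, rfl⟩ := hcarried hy hz hxyz
  obtain ⟨cz, rfl⟩ := hcarried hz hy (openSegment_symm ℝ (cy • C.chain) z ▸ hxyz)
  rw [C.smul_chain_mem_stableBall_iff hw] at hy hz
  rw [hext.2 hy hz (mem_openSegment_of_smul_mem_openSegment_smul C.chain_ne_zero hxyz)]
end
end

section
/- Let (G,w) be a weighted graph and let C = Σ_{i∈I(C)} ε_i e_i be an oriented simple circuit of G. Let F(C) = conv{(ε_i/w(e_i))·e_i : i ∈ I(C)} be the face of the weighted ℓ¹ unit ball B_{w,1} of C(G,ℝ) spanned by the corresponding normalized signed edge vectors. Then the point X = C/‖C‖_w lies in the relative interior of F(C), and the intersection of H_1(G,ℝ) with the relative interior of F(C) is exactly the single point X. -/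
noncomputable section

namespace CircuitFace

open Multigraph Finset

variable {G : Multigraph} (w : G.E → ℝ) (C : Multigraph.Circuit G)

/-- The sign `ε_i` of the `i`-th edge of the circuit. -/
def sgn (i : ZMod C.n) : ℝ := if C.dir i then 1 else -1

/-- The coefficient `ε_i / w(e_i)`. -/
def kap (i : ZMod C.n) : ℝ :=
  if C.dir i then (w (C.edge i))⁻¹ else -(w (C.edge i))⁻¹

/-- The vertex `(ε_i / w(e_i)) • e_i` of the face `F(C)`. -/
def pt (i : ZMod C.n) : G.E → ℝ := kap w C i • (Pi.single (C.edge i) 1 : G.E → ℝ)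

lemma sgn_sq (i : ZMod C.n) : sgn C i * sgn C i = 1 := by
  by_cases h : C.dir i <;> simp [sgn, h]

lemma kap_eq (i : ZMod C.n) : kap w C i = sgn C i * (w (C.edge i))⁻¹ := by
  by_cases h : C.dir i <;> simp [kap, sgn, h]

lemma w_mul_kap (hw : ∀ e, 0 < w e) (i : ZMod C.n) :
    w (C.edge i) * kap w C i = sgn C i := by
  by_cases h : C.dir i <;>
    simp [kap, sgn, h, mul_inv_cancel₀ (hw (C.edge i)).ne', mul_neg]

variable [NeZero C.n]

lemma sum_single_apply (b : ZMod C.n → ℝ) (e : G.E) :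
    (∑ j : ZMod C.n, b j • (Pi.single (C.edge j) 1 : G.E → ℝ)) e
      = ∑ j : ZMod C.n, if C.edge j = e then b j else 0 := by
  rw [Finset.sum_apply]
  refine Finset.sum_congr rfl fun j _ => ?_
  by_cases h : C.edge j = e
  · subst h; simp
  · simp [h, Pi.single_eq_of_ne (Ne.symm h)]

lemma sum_pt_apply (s : Finset (ZMod C.n)) (c : ZMod C.n → ℝ) (i : ZMod C.n) :
    (∑ j ∈ s, c j • pt w C j) (C.edge i) = if i ∈ s then c i * kap w C i else 0 := by
  rw [Finset.sum_apply]
  have h1 : ∀ j ∈ s, (c j • pt w C j) (C.edge i)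
      = if j = i then c j * kap w C j else 0 := by
    intro j _
    by_cases h : j = i
    · subst h; simp [pt, mul_assoc]
    · have hne : C.edge j ≠ C.edge i := fun hx => h (C.edgeInj hx)
      simp [pt, h, Pi.single_eq_of_ne (Ne.symm hne)]
  rw [Finset.sum_congr rfl h1, Finset.sum_ite_eq' s i (fun j => c j * kap w C j)]

lemma chain_apply (e : G.E) :
    C.chain e = ∑ j : ZMod C.n, if C.edge j = e then sgn C j else 0 := rfl

lemma chain_single :
    C.chain = ∑ j : ZMod C.n, sgn C j • (Pi.single (C.edge j) 1 : G.E → ℝ) := by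
  funext e
  rw [chain_apply C e, sum_single_apply C (sgn C) e]

lemma wnorm_chain (hw : ∀ e, 0 < w e) :
    G.wnorm w C.chain = ∑ j : ZMod C.n, w (C.edge j) := by
  unfold Multigraph.wnorm
  have key : ∀ e : G.E, w e * |C.chain e|
      = ∑ j : ZMod C.n, if C.edge j = e then w (C.edge j) else 0 := by
    intro e
    by_cases he : ∃ j, C.edge j = e
    · obtain ⟨j0, rfl⟩ := he
      have h1 : C.chain (C.edge j0) = sgn C j0 := by
        rw [chain_apply]
        rw [Finset.sum_eq_single j0 (fun j _ hj => if_neg (fun h => hj (C.edgeInj h)))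
          (fun h => absurd (Finset.mem_univ j0) h), if_pos rfl]
      have h2 : (∑ j : ZMod C.n, if C.edge j = C.edge j0 then w (C.edge j) else 0)
          = w (C.edge j0) := by
        rw [Finset.sum_eq_single j0 (fun j _ hj => if_neg (fun h => hj (C.edgeInj h)))
          (fun h => absurd (Finset.mem_univ j0) h), if_pos rfl]
      rw [h1, h2]
      by_cases hd : C.dir j0 <;> simp [sgn, hd]
    · push_neg at he
      have h1 : C.chain e = 0 := by
        rw [chain_apply]
        exact Finset.sum_eq_zero fun j _ => if_neg (he j)
      rw [h1]
      simp only [abs_zero, mul_zero]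
      exact (Finset.sum_eq_zero fun j _ => if_neg (he j)).symm
  rw [Finset.sum_congr rfl fun e _ => key e, Finset.sum_comm]
  refine Finset.sum_congr rfl fun j _ => ?_
  rw [Finset.sum_ite_eq Finset.univ (C.edge j) (fun _ => w (C.edge j)),
    if_pos (Finset.mem_univ _)]

lemma boundary_apply (u : (G.E → ℝ)) (v : G.V) :
    G.boundary u v = ∑ e : G.E,
      ((if G.tgt e = v then (1 : ℝ) else 0) - (if G.src e = v then 1 else 0)) * u e := by
  simp [Multigraph.boundary, LinearMap.pi_apply, LinearMap.coe_sum, Finset.sum_apply,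
    LinearMap.smul_apply, LinearMap.proj_apply, smul_eq_mul]

lemma boundary_master (a : ZMod C.n → ℝ) (v : G.V) :
    G.boundary (∑ j : ZMod C.n, (sgn C j * a j) • (Pi.single (C.edge j) 1 : G.E → ℝ)) v
      = ∑ j : ZMod C.n,
        ((if C.vert (j + 1) = v then (1 : ℝ) else 0)
          - (if C.vert j = v then 1 else 0)) * a j := by
  rw [boundary_apply]
  have h1 : ∀ e : G.E,
      ((if G.tgt e = v then (1 : ℝ) else 0) - (if G.src e = v then 1 else 0)) *
        (∑ j : ZMod C.n, (sgn C j * a j) • (Pi.single (C.edge j) 1 : G.E → ℝ)) e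
      = ∑ j : ZMod C.n, if C.edge j = e then
          ((if G.tgt e = v then (1 : ℝ) else 0) - (if G.src e = v then 1 else 0)) *
            (sgn C j * a j) else 0 := by
    intro e
    rw [sum_single_apply, Finset.mul_sum]
    exact Finset.sum_congr rfl fun j _ => by by_cases h : C.edge j = e <;> simp [h]
  rw [Finset.sum_congr rfl fun e _ => h1 e, Finset.sum_comm]
  refine Finset.sum_congr rfl fun j _ => ?_
  rw [Finset.sum_ite_eq Finset.univ (C.edge j), if_pos (Finset.mem_univ _)]
  rcases C.incid j with ⟨hd, hs, ht⟩ | ⟨hd, hs, ht⟩ <;> rw [hs, ht] <;>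
    simp [sgn, hd] <;> ring

lemma boundary_master_vert (a : ZMod C.n → ℝ) (k : ZMod C.n) :
    G.boundary (∑ j : ZMod C.n, (sgn C j * a j) • (Pi.single (C.edge j) 1 : G.E → ℝ)) (C.vert k)
      = a (k - 1) - a k := by
  rw [boundary_master]
  have h1 : ∀ j : ZMod C.n,
      ((if C.vert (j + 1) = C.vert k then (1 : ℝ) else 0)
        - (if C.vert j = C.vert k then 1 else 0)) * a j
      = (if j = k - 1 then a j else 0) - (if j = k then a j else 0) := by
    intro j
    have e1 : (C.vert (j + 1) = C.vert k) ↔ (j = k - 1) := by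
      rw [C.vertInj.eq_iff]
      constructor
      · intro h; exact eq_sub_of_add_eq h
      · intro h; rw [h]; ring
    have e2 : (C.vert j = C.vert k) ↔ (j = k) := C.vertInj.eq_iff
    simp only [e1, e2]
    by_cases hA : j = k - 1
    · by_cases hB : j = k
      · simp only [if_pos hA, if_pos hB]; ring
      · simp only [if_pos hA, if_neg hB]; ring
    · by_cases hB : j = k
      · simp only [if_neg hA, if_pos hB]; ring
      · simp only [if_neg hA, if_neg hB]; ring
  rw [Finset.sum_congr rfl fun j _ => h1 j, Finset.sum_sub_distrib,
    Finset.sum_ite_eq' Finset.univ (k - 1) a, Finset.sum_ite_eq' Finset.univ k a]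
  simp

lemma boundary_const (c : ℝ) (v : G.V) :
    G.boundary (∑ j : ZMod C.n, (sgn C j * c) • (Pi.single (C.edge j) 1 : G.E → ℝ)) v = 0 := by
  rw [boundary_master C (fun _ => c) v]
  have h1 : ∀ j : ZMod C.n,
      ((if C.vert (j + 1) = v then (1 : ℝ) else 0) - (if C.vert j = v then 1 else 0)) * c
      = (if C.vert (j + 1) = v then (1 : ℝ) else 0) * c
        - (if C.vert j = v then (1 : ℝ) else 0) * c := fun j => sub_mul _ _ _
  rw [Finset.sum_congr rfl fun j _ => h1 j, Finset.sum_sub_distrib,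
    Fintype.sum_equiv (Equiv.addRight (1 : ZMod C.n))
      (fun j => (if C.vert (j + 1) = v then (1 : ℝ) else 0) * c)
      (fun j => (if C.vert j = v then (1 : ℝ) else 0) * c) (fun j => rfl)]
  exact sub_self _

lemma sum_pt_form (t : ZMod C.n → ℝ) :
    ∑ j : ZMod C.n, t j • pt w C j
      = ∑ j : ZMod C.n,
          (sgn C j * (t j * (w (C.edge j))⁻¹)) • (Pi.single (C.edge j) 1 : G.E → ℝ) := by
  refine Finset.sum_congr rfl fun j _ => ?_
  rw [pt, smul_smul, kap_eq]
  congr 1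
  ring

lemma zmod_const {n : ℕ} [NeZero n] (a : ZMod n → ℝ)
    (h : ∀ k, a (k - 1) = a k) (i j : ZMod n) : a i = a j := by
  have step : ∀ k : ZMod n, a (k + 1) = a k := fun k => by
    have h9 := h (k + 1); rw [add_sub_cancel_right] at h9; exact h9.symm
  have key : ∀ (m : ℕ) (k : ZMod n), a (k + (m : ZMod n)) = a k := by
    intro m
    induction m with
    | zero => intro k; simp
    | succ m ih =>
      intro k
      have hc : ((m + 1 : ℕ) : ZMod n) = (m : ZMod n) + 1 := by push_cast; ring
      rw [hc, ← add_assoc]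
      exact (step (k + (m : ZMod n))).trans (ih k)
  have hcast : (((j - i).val : ℕ) : ZMod n) = j - i := by
    rw [ZMod.natCast_val, ZMod.cast_id]
  have h2 := key (j - i).val i
  rw [hcast, show i + (j - i) = j from by ring] at h2
  exact h2.symm

end CircuitFace

open Multigraph in
/-- **Lemma A1 (key step).** For an oriented simple circuit `C = Σ_{i∈I(C)} ε_i e_i`, let
`F(C) = conv{(ε_i / w(e_i)) • e_i : i ∈ I(C)}` be the corresponding face of the weighted
ℓ¹ unit ball. Then `X = C/‖C‖_w` lies in the relative (intrinsic) interior of `F(C)`, and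
the intersection of `H_1(G,ℝ)` with this relative interior is exactly `{X}`. -/
theorem homology_inter_relint_face_eq_singleton
    (G : Multigraph) (w : G.E → ℝ) (hw : ∀ e, 0 < w e) (C : Multigraph.Circuit G) :
    let F : Set (G.E → ℝ) := convexHull ℝ
      {p : G.E → ℝ | ∃ i : ZMod C.n,
        p = (if C.dir i then (w (C.edge i))⁻¹ else -(w (C.edge i))⁻¹) •
          (Pi.single (C.edge i) (1 : ℝ) : G.E → ℝ)}
    let X : G.E → ℝ := (G.wnorm w C.chain)⁻¹ • C.chain
    X ∈ intrinsicInterior ℝ F ∧ (G.H1 : Set (G.E → ℝ)) ∩ intrinsicInterior ℝ F = {X} := by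
  haveI : NeZero C.n := ⟨C.npos.ne'⟩
  classical
  intro F X
  open CircuitFace in
  have hXdef : X = (G.wnorm w C.chain)⁻¹ • C.chain := rfl
  have hFdef : F = convexHull ℝ (Set.range (CircuitFace.pt w C)) := by
    show convexHull ℝ _ = _
    congr 1
    ext x
    exact ⟨fun ⟨i, h⟩ => ⟨i, h.symm⟩, fun ⟨i, h⟩ => ⟨i, h.symm⟩⟩
  set L : ℝ := ∑ j : ZMod C.n, w (C.edge j) with hLdef
  have hL : 0 < L := Finset.sum_pos (fun j _ => hw _) ⟨0, Finset.mem_univ 0⟩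
  have hwnorm : G.wnorm w C.chain = L := CircuitFace.wnorm_chain w C hw
  have hXform : (G.wnorm w C.chain)⁻¹ • C.chain
      = ∑ j : ZMod C.n, (CircuitFace.sgn C j * L⁻¹) • (Pi.single (C.edge j) 1 : G.E → ℝ) := by
    rw [hwnorm, CircuitFace.chain_single C, Finset.smul_sum]
    refine Finset.sum_congr rfl fun j _ => ?_
    rw [smul_smul]
    congr 1
    ring
  have hXrep : (G.wnorm w C.chain)⁻¹ • C.chain
      = ∑ j : ZMod C.n, (w (C.edge j) * L⁻¹) • CircuitFace.pt w C j := by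
    rw [hXform, CircuitFace.sum_pt_form w C (fun j => w (C.edge j) * L⁻¹)]
    refine Finset.sum_congr rfl fun j _ => ?_
    congr 1
    rw [show w (C.edge j) * L⁻¹ * (w (C.edge j))⁻¹ = L⁻¹ * (w (C.edge j) * (w (C.edge j))⁻¹)
      from by ring, mul_inv_cancel₀ (hw (C.edge j)).ne', mul_one]
  have hXF : X ∈ convexHull ℝ (Set.range (CircuitFace.pt w C)) := by
    rw [hXdef, hXrep]
    refine (convex_convexHull ℝ _).sum_mem
      (fun j _ => mul_nonneg (hw _).le (inv_nonneg.mpr hL.le)) ?_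
      (fun j _ => subset_convexHull ℝ _ (Set.mem_range_self j))
    rw [← Finset.sum_mul, ← hLdef, mul_inv_cancel₀ hL.ne']
  have hXcoord : ∀ i : ZMod C.n,
      X (C.edge i) = (w (C.edge i) * L⁻¹) * CircuitFace.kap w C i := by
    intro i
    rw [hXdef, hXrep, CircuitFace.sum_pt_apply w C Finset.univ _ i,
      if_pos (Finset.mem_univ i)]
  have hXrelint : X ∈ intrinsicInterior ℝ F := by
    rw [mem_intrinsicInterior]
    have hXspan : X ∈ affineSpan ℝ F := subset_affineSpan ℝ F (by rw [hFdef]; exact hXF)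
    refine ⟨⟨X, hXspan⟩, ?_, rfl⟩
    rw [mem_interior]
    refine ⟨Subtype.val ⁻¹' {x : G.E → ℝ |
        ∀ i : ZMod C.n, 0 < CircuitFace.sgn C i * (w (C.edge i) * x (C.edge i))}, ?_, ?_, ?_⟩
    · rintro ⟨x, hxspan⟩ hx
      simp only [Set.mem_preimage, Set.mem_setOf_eq] at hx ⊢
      have hxspan' : x ∈ affineSpan ℝ (Set.range (CircuitFace.pt w C)) := by
        rw [hFdef, affineSpan_convexHull] at hxspan
        exact hxspan
      obtain ⟨s, c, hc1, hcs⟩ := eq_affineCombination_of_mem_affineSpan hxspan'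
      have hx_eq : x = ∑ j ∈ s, c j • CircuitFace.pt w C j := by
        rw [hcs, Finset.affineCombination_eq_linear_combination s _ c hc1]
      have hc0 : ∀ j ∈ s, 0 ≤ c j := by
        intro j hj
        have h2 := hx j
        have h3 : x (C.edge j) = c j * CircuitFace.kap w C j := by
          rw [hx_eq, CircuitFace.sum_pt_apply w C s c j, if_pos hj]
        rw [h3, show w (C.edge j) * (c j * CircuitFace.kap w C j)
            = c j * (w (C.edge j) * CircuitFace.kap w C j) from by ring,
          CircuitFace.w_mul_kap w C hw j,
          show CircuitFace.sgn C j * (c j * CircuitFace.sgn C j)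
            = (CircuitFace.sgn C j * CircuitFace.sgn C j) * c j from by ring,
          CircuitFace.sgn_sq C j, one_mul] at h2
        exact h2.le
      rw [hFdef]
      show x ∈ convexHull ℝ (Set.range (CircuitFace.pt w C))
      rw [hx_eq]
      exact (convex_convexHull ℝ _).sum_mem hc0 hc1
        (fun j _ => subset_convexHull ℝ _ (Set.mem_range_self j))
    · refine IsOpen.preimage continuous_subtype_val ?_
      rw [Set.setOf_forall]
      exact isOpen_iInter_of_finite fun i => isOpen_lt continuous_const
        (continuous_const.mul (continuous_const.mul (continuous_apply (C.edge i))))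
    · simp only [Set.mem_preimage, Set.mem_setOf_eq]
      intro i
      rw [hXcoord i,
        show w (C.edge i) * ((w (C.edge i) * L⁻¹) * CircuitFace.kap w C i)
          = (w (C.edge i) * L⁻¹) * (w (C.edge i) * CircuitFace.kap w C i) from by ring,
        CircuitFace.w_mul_kap w C hw i,
        show CircuitFace.sgn C i * ((w (C.edge i) * L⁻¹) * CircuitFace.sgn C i)
          = (CircuitFace.sgn C i * CircuitFace.sgn C i) * (w (C.edge i) * L⁻¹) from by ring,
        CircuitFace.sgn_sq C i, one_mul]
      exact mul_pos (hw _) (inv_pos.mpr hL)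
  have hXH1 : X ∈ G.H1 := by
    have hb : G.boundary ((G.wnorm w C.chain)⁻¹ • C.chain) = 0 := by
      rw [hXform]
      funext v
      rw [CircuitFace.boundary_const C L⁻¹ v]
      rfl
    exact LinearMap.mem_ker.mpr hb
  have huniq : ∀ y, y ∈ G.H1 → y ∈ convexHull ℝ (Set.range (CircuitFace.pt w C)) → y = X := by
    intro y hy1 hy2
    rw [convexHull_range_eq_exists_affineCombination] at hy2
    obtain ⟨s, c, hc0, hc1, hcy⟩ := hy2
    have hy_eq : y = ∑ j ∈ s, c j • CircuitFace.pt w C j := by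
      rw [← hcy, Finset.affineCombination_eq_linear_combination s _ c hc1]
    set t : ZMod C.n → ℝ := fun j => if j ∈ s then c j else 0 with htdef
    have hyt : y = ∑ j : ZMod C.n, t j • CircuitFace.pt w C j := by
      have e1 : ∑ j ∈ s, c j • CircuitFace.pt w C j
          = ∑ j ∈ s, t j • CircuitFace.pt w C j :=
        Finset.sum_congr rfl fun j hj => by simp [htdef, hj]
      rw [hy_eq, e1]
      exact Finset.sum_subset (Finset.subset_univ s) (fun j _ hj => by simp [htdef, hj])
    set a : ZMod C.n → ℝ := fun j => t j * (w (C.edge j))⁻¹ with hadef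
    have hyform : y = ∑ j : ZMod C.n,
        (CircuitFace.sgn C j * a j) • (Pi.single (C.edge j) 1 : G.E → ℝ) :=
      hyt.trans (CircuitFace.sum_pt_form w C t)
    have hbd : G.boundary y = 0 := LinearMap.mem_ker.mp hy1
    have hconst : ∀ k, a (k - 1) = a k := by
      intro k
      have h5 : G.boundary y (C.vert k) = a (k - 1) - a k := by
        rw [hyform]
        exact CircuitFace.boundary_master_vert C a k
      rw [hbd] at h5
      simp only [Pi.zero_apply] at h5
      linarith [h5]
    have hconst' := CircuitFace.zmod_const a hconst
    have ht_eq : ∀ j, t j = a 0 * w (C.edge j) := by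
      intro j
      have h6 : t j * (w (C.edge j))⁻¹ = a 0 := hconst' j 0
      calc t j = t j * (w (C.edge j))⁻¹ * w (C.edge j) := by
            rw [mul_assoc, inv_mul_cancel₀ (hw (C.edge j)).ne', mul_one]
        _ = a 0 * w (C.edge j) := by rw [h6]
    have hsum_t : ∑ j : ZMod C.n, t j = 1 := by
      have e1 : ∑ j ∈ s, c j = ∑ j ∈ s, t j :=
        Finset.sum_congr rfl fun j hj => by simp [htdef, hj]
      rw [← hc1, e1]
      exact (Finset.sum_subset (Finset.subset_univ s)
        (fun j _ hj => by simp [htdef, hj])).symm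
    have ha0L : a 0 * L = 1 := by
      rw [hLdef, Finset.mul_sum, ← hsum_t]
      exact Finset.sum_congr rfl fun j _ => (ht_eq j).symm
    have ha0 : a 0 = L⁻¹ := by
      calc a 0 = a 0 * L * L⁻¹ := by rw [mul_assoc, mul_inv_cancel₀ hL.ne', mul_one]
        _ = L⁻¹ := by rw [ha0L, one_mul]
    rw [hyt, hXdef, hXrep]
    refine Finset.sum_congr rfl fun j _ => ?_
    rw [ht_eq j, ha0, mul_comm]
  refine ⟨hXrelint, ?_⟩
  apply Set.eq_singleton_iff_unique_mem.mpr
  refine ⟨⟨hXH1, hXrelint⟩, fun y hy => ?_⟩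
  refine huniq y hy.1 ?_
  have h7 := intrinsicInterior_subset hy.2
  rwa [hFdef] at h7
end
end
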